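/- If P is an equilateral polygon (all side lengths equal) with nonzero signed area, then its circumcenter of mass equals the centroid of the homogeneous lamina bounded by P. -/

import Mathlib

/-!
Rewritten as a sum over the edges `(p, q) = (V i, V (i + 1))`, the first coordinate of the CCM
numerator has edge terms `3 (q₂|p|² - p₂|q|²)`, and a polynomial identity turns each of them into
`2 (p₁ + q₁)(p × q) + |q - p|² (q₂ - p₂) - (q₂|q|² - p₂|p|²)`. When every `|q - p|²` equals the same
`c`, the last two terms telescope around the polygon, so three times the CCM numerator is twice the
centroid numerator, which is exactly what the prefactors `1/(4A)` and `1/(6A)` require. The second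
coordinate follows by turning the polygon through a right angle, which preserves side lengths and
cross products.
-/

open Finset

/-- Squared norm of a plane vector. -/
noncomputable def nsq (v : ℝ × ℝ) : ℝ := v.1 ^ 2 + v.2 ^ 2

/-- Signed area of the closed polygon with vertices `V i`, indices mod `n`. -/
noncomputable def polyArea {n : ℕ} [NeZero n] (V : ZMod n → ℝ × ℝ) : ℝ :=
  (∑ i, ((V i).1 * (V (i + 1)).2 - (V (i + 1)).1 * (V i).2)) / 2

/-- The coordinate formula for the circumcenter of mass of a polygon. -/
noncomputable def ccmF {n : ℕ} [NeZero n] (V : ZMod n → ℝ × ℝ) : ℝ × ℝ :=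
  (4 * polyArea V)⁻¹ •
    ((∑ i, (V i).2 * (nsq (V (i - 1)) - nsq (V (i + 1)))),
     (∑ i, -(V i).1 * (nsq (V (i - 1)) - nsq (V (i + 1)))))

/-- The centroid of the homogeneous lamina bounded by the polygon. -/
noncomputable def cmF {n : ℕ} [NeZero n] (V : ZMod n → ℝ × ℝ) : ℝ × ℝ :=
  (6 * polyArea V)⁻¹ •
    ((∑ i, ((V i).1 + (V (i + 1)).1) * ((V i).1 * (V (i + 1)).2 - (V (i + 1)).1 * (V i).2)),
     (∑ i, ((V i).2 + (V (i + 1)).2) * ((V i).1 * (V (i + 1)).2 - (V (i + 1)).1 * (V i).2)))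

theorem Fintype.sum_comp_add_right_sub {G M : Type*} [AddGroup G] [Fintype G] [AddCommGroup M]
    (f : G → M) (a : G) : ∑ i, (f (i + a) - f i) = 0 := by
  rw [sum_sub_distrib, sub_eq_zero]
  exact Equiv.sum_comp (Equiv.addRight a) f

theorem three_mul_ccm_edge_fst (p q : ℝ × ℝ) :
    3 * (q.2 * nsq p - p.2 * nsq q) =
      2 * ((p.1 + q.1) * (p.1 * q.2 - q.1 * p.2)) + nsq (q - p) * (q.2 - p.2)
        - (q.2 * nsq q - p.2 * nsq p) := by
  simp only [nsq, Prod.fst_sub, Prod.snd_sub]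
  ring

section Numerators

variable {n : ℕ} [NeZero n] (V : ZMod n → ℝ × ℝ) {c : ℝ}

theorem three_mul_ccm_numerator_fst (hc : ∀ i, nsq (V (i + 1) - V i) = c) :
    3 * ∑ i, (V i).2 * (nsq (V (i - 1)) - nsq (V (i + 1))) =
      2 * ∑ i, ((V i).1 + (V (i + 1)).1) * ((V i).1 * (V (i + 1)).2 - (V (i + 1)).1 * (V i).2) := by
  have edges : ∑ i, (V i).2 * (nsq (V (i - 1)) - nsq (V (i + 1))) =
      ∑ i, ((V (i + 1)).2 * nsq (V i) - (V i).2 * nsq (V (i + 1))) := by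
    have shift : ∑ i, (V i).2 * nsq (V (i - 1)) = ∑ i, (V (i + 1)).2 * nsq (V i) := by
      simpa using (Equiv.sum_comp (Equiv.addRight 1) fun i => (V i).2 * nsq (V (i - 1))).symm
    simp only [mul_sub, sum_sub_distrib, shift]
  rw [edges, mul_sum, mul_sum]
  simp only [three_mul_ccm_edge_fst, hc, sum_sub_distrib, sum_add_distrib, ← mul_sum,
    Fintype.sum_comp_add_right_sub (fun v => (V v).2),
    Fintype.sum_comp_add_right_sub (fun v => (V v).2 * nsq (V v))]
  ring

theorem three_mul_ccm_numerator_snd (hc : ∀ i, nsq (V (i + 1) - V i) = c) :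
    3 * ∑ i, -(V i).1 * (nsq (V (i - 1)) - nsq (V (i + 1))) =
      2 * ∑ i, ((V i).2 + (V (i + 1)).2) * ((V i).1 * (V (i + 1)).2 - (V (i + 1)).1 * (V i).2) := by
  have nsq_rotate (v : ℝ × ℝ) : nsq (-v.2, v.1) = nsq v := by
    simp only [nsq]
    ring
  have h := three_mul_ccm_numerator_fst (c := c) (fun j => (-(V j).2, (V j).1)) fun i => by
    rw [← hc i, ← nsq_rotate (V (i + 1) - V i)]
    simp only [Prod.mk_sub_mk, Prod.fst_sub, Prod.snd_sub, neg_sub_neg, neg_sub]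
  have cross_rotate (p q : ℝ × ℝ) : (-p.2 + -q.2) * (-p.2 * q.1 - -q.2 * p.1) =
      -((p.2 + q.2) * (p.1 * q.2 - q.1 * p.2)) := by
    ring
  simp only [nsq_rotate, cross_rotate, sum_neg_distrib] at h
  simp only [neg_mul, sum_neg_distrib]
  linarith

end Numerators

theorem stmt6_general (n : ℕ) [NeZero n] (V : ZMod n → ℝ × ℝ)
    (c : ℝ) (hc : ∀ i, nsq (V (i + 1) - V i) = c) :
    ccmF V = cmF V := by
  have scale {N₁ N₂ : ℝ} (h : 3 * N₁ = 2 * N₂) :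
      (4 * polyArea V)⁻¹ * N₁ = (6 * polyArea V)⁻¹ * N₂ := by
    linear_combination (polyArea V)⁻¹ / 12 * h
  unfold ccmF cmF
  ext
  · exact scale (three_mul_ccm_numerator_fst V hc)
  · exact scale (three_mul_ccm_numerator_snd V hc)

/-- If `P` is an equilateral polygon of nonzero signed area, its circumcenter of
mass coincides with the centroid of the lamina bounded by `P`. -/
theorem stmt6 (n : ℕ) [NeZero n] (V : ZMod n → ℝ × ℝ)
    (c : ℝ) (hc : ∀ i, nsq (V (i + 1) - V i) = c)
    (hA : polyArea V ≠ 0) :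
    ccmF V = cmF V :=
  stmt6_general n V c hc
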